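/- arXiv:1702.07958 — 2 statements merged into one kernel-verified Lean document; each statement's English description precedes it below -/
import Mathlib

section
/- Let k ≥ 2, d ≥ 1, T ≥ 1, and let (x_1,y_1),…,(x_T,y_T) ∈ ℝ^d × {1,…,k} be any sequence with ‖x_t‖ ≤ X for all t ∈ [T]. Run the multiclass Perceptron on this sequence and let M_T be its number of mistakes. Then for every U ∈ ℝ^{k×d}, writing L_1 = Σ_{t=1}^T ℓ(U,(x_t,y_t)) for the cumulative multiclass hinge loss of U, one has M_T ≤ L_1 + 2 X² ‖U‖_F² + X ‖U‖_F √2 √(L_1). -/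
/-!
Flatten matrices into the Euclidean space on `Fin k × Fin d`. Each Perceptron step adds
`v_t = (e_{y_t} - e_{ŷ_t}) x_tᵀ` to `W_t`, which is zero exactly when no mistake is made.
Since `ŷ_t` maximizes `W_t x_t`, `⟪W_t, v_t⟫ ≤ 0`, so `‖W_T‖² ≤ ∑ ‖v_t‖² ≤ 2 X² M`.
On the other hand `⟪U, v_t⟫ = (U x_t)_{y_t} - (U x_t)_{ŷ_t} ≥ b_t - ℓ_t`, hence by Cauchy–Schwarz
`M - L₁ ≤ ⟪U, W_T⟫ ≤ ‖U‖_F √2 X √M`, and solving this quadratic inequality in `√M` gives the bound.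
-/

open Finset

/-- Multiclass hinge loss: `max_{i ≠ y} [1 - (Ux)_y + (Ux)_i]_+`. -/
noncomputable def mcHinge {k d : ℕ} (U : Matrix (Fin k) (Fin d) ℝ)
    (x : Fin d → ℝ) (y : Fin k) : ℝ :=
  ⨆ i : {i : Fin k // i ≠ y}, max 0 (1 - U.mulVec x y + U.mulVec x i.val)

open Matrix
open scoped RealInnerProductSpace

theorem eq_sum_of_succ_eq_add {E : Type*} [AddCommMonoid E] {T : ℕ} {w : ℕ → E}
    {v : Fin T → E} (h0 : w 0 = 0) (hs : ∀ t : Fin T, w (t + 1) = w t + v t) :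
    w T = ∑ t, v t := by
  induction T with
  | zero => simpa using h0
  | succ T ih =>
    rw [Fin.sum_univ_castSucc, ← ih fun t => hs t.castSucc]
    exact hs (Fin.last T)

theorem norm_sq_le_sum_of_inner_le_zero {E : Type*} [NormedAddCommGroup E]
    [InnerProductSpace ℝ E] {T : ℕ} {w : ℕ → E} {v : Fin T → E} (h0 : w 0 = 0)
    (hs : ∀ t : Fin T, w (t + 1) = w t + v t) (hv : ∀ t : Fin T, ⟪w t, v t⟫ ≤ 0) :
    ‖w T‖ ^ 2 ≤ ∑ t, ‖v t‖ ^ 2 := by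
  induction T with
  | zero => simp [h0]
  | succ T ih =>
    have hstep := hs (Fin.last T)
    have hneg := hv (Fin.last T)
    rw [Fin.val_last] at hstep hneg
    rw [Fin.sum_univ_castSucc, hstep, norm_add_sq_real]
    linarith [ih (fun t => hs t.castSucc) (fun t => hv t.castSucc)]

theorem le_add_sq_add_mul_sqrt_of_le_add_mul_sqrt {M L c : ℝ} (hL : 0 ≤ L) (hc : 0 ≤ c)
    (h : M ≤ L + c * √M) : M ≤ L + c ^ 2 + c * √L := by
  rcases lt_or_ge M 0 with hM | hM
  · have : 0 ≤ L + c ^ 2 + c * √L := by positivity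
    linarith
  · have hs : √M ^ 2 = M := Real.sq_sqrt hM
    have hl : √L ^ 2 = L := Real.sq_sqrt hL
    have hle : √M ≤ c + √L := by
      nlinarith [Real.sqrt_nonneg M, Real.sqrt_nonneg L]
    nlinarith [Real.sqrt_nonneg M, Real.sqrt_nonneg L]

section Frobenius

variable {m n : Type*}

noncomputable def Matrix.toEuclidean : Matrix m n ℝ →ₗ[ℝ] EuclideanSpace ℝ (m × n) :=
  (WithLp.linearEquiv 2 ℝ (m × n → ℝ)).symm.toLinearMap ∘ₗ
    (LinearEquiv.curry ℝ ℝ m n).symm.toLinearMap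

@[simp]
theorem Matrix.toEuclidean_apply (A : Matrix m n ℝ) (p : m × n) : A.toEuclidean p = A p.1 p.2 :=
  rfl

variable [Fintype m] [Fintype n]

theorem Matrix.inner_toEuclidean (A B : Matrix m n ℝ) :
    ⟪A.toEuclidean, B.toEuclidean⟫ = ∑ i, ∑ j, A i j * B i j := by
  simp [PiLp.inner_apply, Fintype.sum_prod_type, mul_comm]

theorem Matrix.norm_toEuclidean (A : Matrix m n ℝ) :
    ‖A.toEuclidean‖ = √(∑ i, ∑ j, A i j ^ 2) := by
  simp [EuclideanSpace.norm_eq, Fintype.sum_prod_type]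

theorem Matrix.inner_toEuclidean_vecMulVec (A : Matrix m n ℝ) (u : m → ℝ) (v : n → ℝ) :
    ⟪A.toEuclidean, (vecMulVec u v).toEuclidean⟫ = u ⬝ᵥ (A *ᵥ v) := by
  simp only [inner_toEuclidean, vecMulVec_apply, dotProduct, mulVec, mul_sum]
  exact sum_congr rfl fun i _ => sum_congr rfl fun j _ => by ring

theorem Matrix.norm_toEuclidean_vecMulVec_sq (u : m → ℝ) (v : n → ℝ) :
    ‖(vecMulVec u v).toEuclidean‖ ^ 2 = (∑ i, u i ^ 2) * ∑ j, v j ^ 2 := by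
  rw [norm_toEuclidean, Real.sq_sqrt (by positivity), sum_mul_sum]
  simp only [vecMulVec_apply, mul_pow]

end Frobenius

section SingleSubSingle

variable {m n : Type*} [DecidableEq m]

theorem single_sub_single_dotProduct [Fintype m] (a b : m) (f : m → ℝ) :
    (Pi.single a 1 - Pi.single b 1 : m → ℝ) ⬝ᵥ f = f a - f b := by
  simp [sub_dotProduct]

theorem sum_single_sub_single_sq [Fintype m] (a b : m) :
    ∑ i, (Pi.single a 1 - Pi.single b 1 : m → ℝ) i ^ 2 = if b ≠ a then 2 else 0 := by
  have := single_sub_single_dotProduct a b (Pi.single a 1 - Pi.single b 1)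
  simp only [dotProduct, ← sq] at this
  rw [this]
  split_ifs with h
  · simp [h, Ne.symm h]
    norm_num
  · simp [not_not.mp h]

theorem ite_ne_smul_vecMulVec_single_sub_single (a b : m) (x : n → ℝ) :
    (if b ≠ a then (1 : ℝ) else 0) • vecMulVec (Pi.single a 1 - Pi.single b 1) x =
      vecMulVec (Pi.single a 1 - Pi.single b 1) x := by
  split_ifs with h
  · exact one_smul _ _
  · rw [not_not.mp h, sub_self, zero_vecMulVec, smul_zero]

variable [Fintype m] [Fintype n]

theorem inner_toEuclidean_vecMulVec_single_sub_single (A : Matrix m n ℝ) (a b : m)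
    (x : n → ℝ) :
    ⟪A.toEuclidean, (vecMulVec (Pi.single a 1 - Pi.single b 1) x).toEuclidean⟫ =
      (A *ᵥ x) a - (A *ᵥ x) b := by
  rw [inner_toEuclidean_vecMulVec, single_sub_single_dotProduct]

theorem norm_toEuclidean_vecMulVec_single_sub_single_sq_le (a b : m) {x : n → ℝ} {X : ℝ}
    (hx : √(∑ j, x j ^ 2) ≤ X) :
    ‖(vecMulVec (Pi.single a 1 - Pi.single b 1) x).toEuclidean‖ ^ 2 ≤
      2 * X ^ 2 * (if b ≠ a then 1 else 0) := by
  have hx2 := (Real.sqrt_le_iff.1 hx).2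
  rw [norm_toEuclidean_vecMulVec_sq, sum_single_sub_single_sq]
  split_ifs <;> linarith

end SingleSubSingle

section Hinge

variable {k d : ℕ} (U : Matrix (Fin k) (Fin d) ℝ) (x : Fin d → ℝ) (y : Fin k)

theorem mcHinge_nonneg : 0 ≤ mcHinge U x y :=
  Real.iSup_nonneg fun _ => le_max_left _ _

theorem le_mcHinge {i : Fin k} (hi : i ≠ y) : 1 - (U *ᵥ x) y + (U *ᵥ x) i ≤ mcHinge U x y :=
  (le_max_right _ _).trans <|
    le_ciSup (f := fun j : {j // j ≠ y} => max 0 (1 - (U *ᵥ x) y + (U *ᵥ x) j))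
      (Finite.bddAbove_range _) ⟨i, hi⟩

theorem ite_ne_sub_mcHinge_le_inner (yh : Fin k) :
    (if yh ≠ y then (1 : ℝ) else 0) - mcHinge U x y ≤
      ⟪U.toEuclidean, (vecMulVec (Pi.single y 1 - Pi.single yh 1) x).toEuclidean⟫ := by
  rw [inner_toEuclidean_vecMulVec_single_sub_single]
  split_ifs with h
  · linarith [le_mcHinge U x y h]
  · obtain rfl := not_not.mp h
    linarith [mcHinge_nonneg U x yh]

end Hinge

theorem multiclass_perceptron_hinge_mistake_bound_general
    (k d T : ℕ) (hT : 1 ≤ T)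
    (x : Fin T → Fin d → ℝ) (y : Fin T → Fin k)
    (W : ℕ → Matrix (Fin k) (Fin d) ℝ) (yh : Fin T → Fin k)
    (hW0 : W 0 = 0)
    (hargmax : ∀ t : Fin T, ∀ i : Fin k,
      (W t.val).mulVec (x t) i ≤ (W t.val).mulVec (x t) (yh t))
    (hWsucc : ∀ t : Fin T, W (t.val + 1) =
      W t.val + (if yh t ≠ y t then (1:ℝ) else 0) •
        Matrix.vecMulVec (Pi.single (y t) 1 - Pi.single (yh t) 1) (x t))
    (M : ℝ) (hM : M = ∑ t, if yh t ≠ y t then (1:ℝ) else 0)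
    (X : ℝ) (hX : ∀ t, Real.sqrt (∑ j, x t j ^ 2) ≤ X)
    (U : Matrix (Fin k) (Fin d) ℝ)
    (L₁ : ℝ) (hL₁ : L₁ = ∑ t, mcHinge U (x t) (y t)) :
    M ≤ L₁ + 2 * X ^ 2 * (Real.sqrt (∑ i, ∑ j, U i j ^ 2)) ^ 2
      + X * Real.sqrt (∑ i, ∑ j, U i j ^ 2) * Real.sqrt 2 * Real.sqrt L₁ := by
  have hX0 : 0 ≤ X := (Real.sqrt_nonneg _).trans (hX ⟨0, hT⟩)
  set w : ℕ → EuclideanSpace ℝ (Fin k × Fin d) := fun n => (W n).toEuclidean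
  have h0 : w 0 = 0 := by simp only [w, hW0, map_zero]
  have hstep (t : Fin T) : w (t + 1) =
      w t + (vecMulVec (Pi.single (y t) 1 - Pi.single (yh t) 1) (x t)).toEuclidean := by
    simp only [w, hWsucc, ite_ne_smul_vecMulVec_single_sub_single, map_add]
  have hgain : M - L₁ ≤ ⟪U.toEuclidean, w T⟫ := by
    rw [hM, hL₁, ← sum_sub_distrib, eq_sum_of_succ_eq_add h0 hstep, inner_sum]
    exact sum_le_sum fun t _ => ite_ne_sub_mcHinge_le_inner U (x t) (y t) (yh t)
  have hnorm : ‖w T‖ ^ 2 ≤ 2 * X ^ 2 * M := by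
    refine (norm_sq_le_sum_of_inner_le_zero h0 hstep fun t => ?_).trans ?_
    · rw [inner_toEuclidean_vecMulVec_single_sub_single]
      exact sub_nonpos.2 (hargmax t (y t))
    · rw [hM, mul_sum]
      exact sum_le_sum fun t _ => norm_toEuclidean_vecMulVec_single_sub_single_sq_le _ _ (hX t)
  have hM0 : 0 ≤ M := hM ▸ sum_nonneg fun t _ => by positivity
  have hwT : ‖w T‖ ≤ X * √2 * √M := by
    refine (pow_le_pow_iff_left₀ (norm_nonneg _) (by positivity) two_ne_zero).1 ?_
    rwa [mul_pow, mul_pow, Real.sq_sqrt zero_le_two, Real.sq_sqrt hM0, mul_comm (X ^ 2)]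
  have hquad : M ≤ L₁ + X * √(∑ i, ∑ j, U i j ^ 2) * √2 * √M := by
    calc M ≤ L₁ + ‖U.toEuclidean‖ * ‖w T‖ := by linarith [real_inner_le_norm U.toEuclidean (w T)]
      _ ≤ L₁ + ‖U.toEuclidean‖ * (X * √2 * √M) := by gcongr
      _ = _ := by rw [norm_toEuclidean]; ring
  have hL0 : 0 ≤ L₁ := hL₁ ▸ sum_nonneg fun t _ => mcHinge_nonneg U (x t) (y t)
  calc M ≤ _ := le_add_sq_add_mul_sqrt_of_le_add_mul_sqrt hL0 (by positivity) hquad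
    _ = _ := by rw [mul_pow, mul_pow, Real.sq_sqrt zero_le_two]; ring

theorem multiclass_perceptron_hinge_mistake_bound
    (k d T : ℕ) (hk : 2 ≤ k) (hd : 1 ≤ d) (hT : 1 ≤ T)
    (x : Fin T → Fin d → ℝ) (y : Fin T → Fin k)
    (W : ℕ → Matrix (Fin k) (Fin d) ℝ) (yh : Fin T → Fin k)
    (hW0 : W 0 = 0)
    (hargmax : ∀ t : Fin T, ∀ i : Fin k,
      (W t.val).mulVec (x t) i ≤ (W t.val).mulVec (x t) (yh t))
    (hWsucc : ∀ t : Fin T, W (t.val + 1) =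
      W t.val + (if yh t ≠ y t then (1:ℝ) else 0) •
        Matrix.vecMulVec (Pi.single (y t) 1 - Pi.single (yh t) 1) (x t))
    (M : ℝ) (hM : M = ∑ t, if yh t ≠ y t then (1:ℝ) else 0)
    (X : ℝ) (hX : ∀ t, Real.sqrt (∑ j, x t j ^ 2) ≤ X)
    (U : Matrix (Fin k) (Fin d) ℝ)
    (L₁ : ℝ) (hL₁ : L₁ = ∑ t, mcHinge U (x t) (y t)) :
    M ≤ L₁ + 2 * X ^ 2 * (Real.sqrt (∑ i, ∑ j, U i j ^ 2)) ^ 2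
      + X * Real.sqrt (∑ i, ∑ j, U i j ^ 2) * Real.sqrt 2 * Real.sqrt L₁ :=
  multiclass_perceptron_hinge_mistake_bound_general k d T hT x y W yh hW0 hargmax hWsucc M hM X hX U
    L₁ hL₁
end

section
/- Let k ≥ 2, d ≥ 1, T ≥ 1, and let (x_1,y_1),…,(x_T,y_T) ∈ ℝ^d × {1,…,k} be any sequence with ‖x_t‖ ≤ X for all t ∈ [T]. Run the multiclass Perceptron on this sequence and let M_T be its number of mistakes. Then for every U ∈ ℝ^{k×d}, writing L_2 = Σ_{t=1}^T ℓ(U,(x_t,y_t))² for the cumulative squared multiclass hinge loss of U, one has M_T ≤ L_2 + 2 X² ‖U‖_F² + X ‖U‖_F · 2√2 · √(L_2). -/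
open Finset

/-!
Novikoff's argument. On a mistake, `W` gains `(e_y - e_ŷ) xᵀ`: this raises `⟨W, U⟩` by
`(Ux)_y - (Ux)_ŷ ≥ 1 - ℓ_t` and, since `ŷ` maximises `W x`, raises `‖W‖²` by at most
`2 ‖x‖² ≤ 2 X²`. Hence `M - ∑ b_t ℓ_t ≤ ⟨W_T, U⟩ ≤ ‖W_T‖ ‖U‖ ≤ √2 X √M ‖U‖`, while Cauchy–Schwarz
gives `∑ b_t ℓ_t ≤ √M √L₂`. Thus `M ≤ √M (√L₂ + √2 X ‖U‖)`, i.e. `M ≤ (√L₂ + √2 X ‖U‖)²`.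
-/

open Matrix

theorem Fin.sum_univ_sub_succ {G : Type*} [AddCommGroup G] (f : ℕ → G) (n : ℕ) :
    ∑ i : Fin n, (f (i + 1) - f i) = f n - f 0 := by
  rw [Fin.sum_univ_eq_sum_range (fun i => f (i + 1) - f i), sum_range_sub]

theorem Real.le_sq_of_le_sqrt_mul {a c : ℝ} (ha : 0 ≤ a) (h : a ≤ √a * c) : a ≤ c ^ 2 := by
  nlinarith [sq_nonneg (c - √a), Real.sq_sqrt ha, Real.sqrt_nonneg a]

theorem sum_ite_one_mul_le_sqrt_mul_sqrt {ι : Type*} [Fintype ι] (p : ι → Prop)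
    [DecidablePred p] (f : ι → ℝ) :
    ∑ i, (if p i then (1:ℝ) else 0) * f i ≤
      √(∑ i, if p i then (1:ℝ) else 0) * √(∑ i, f i ^ 2) := by
  have hsq : ∀ i, (if p i then (1:ℝ) else 0) ^ 2 = if p i then 1 else 0 :=
    fun i => by split_ifs <;> norm_num
  simpa only [hsq] using Real.sum_mul_le_sqrt_mul_sqrt univ (fun i => if p i then (1:ℝ) else 0) f

namespace Matrix

variable {m n : Type*} [Fintype m] [Fintype n]

def frobeniusInner (A B : Matrix m n ℝ) : ℝ := ∑ i, ∑ j, A i j * B i j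

theorem frobeniusInner_comm (A B : Matrix m n ℝ) : frobeniusInner A B = frobeniusInner B A := by
  simp only [frobeniusInner, mul_comm]

theorem frobeniusInner_add_left (A B C : Matrix m n ℝ) :
    frobeniusInner (A + B) C = frobeniusInner A C + frobeniusInner B C := by
  simp only [frobeniusInner, add_apply, add_mul, sum_add_distrib]

theorem frobeniusInner_vecMulVec_left (v : m → ℝ) (x : n → ℝ) (B : Matrix m n ℝ) :
    frobeniusInner (vecMulVec v x) B = v ⬝ᵥ (B *ᵥ x) := by
  simp only [frobeniusInner, vecMulVec_apply, dotProduct, mulVec, mul_sum]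
  exact sum_congr rfl fun i _ => sum_congr rfl fun j _ => by ring

theorem frobeniusInner_self (A : Matrix m n ℝ) : frobeniusInner A A = ∑ i, ∑ j, A i j ^ 2 := by
  simp only [frobeniusInner, sq]

theorem frobeniusInner_le_sqrt_mul_sqrt (A B : Matrix m n ℝ) :
    frobeniusInner A B ≤ √(∑ i, ∑ j, A i j ^ 2) * √(∑ i, ∑ j, B i j ^ 2) := by
  simpa only [frobeniusInner, Fintype.sum_prod_type] using
    Real.sum_mul_le_sqrt_mul_sqrt univ (fun p : m × n => A p.1 p.2) (fun p => B p.1 p.2)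

theorem frobeniusInner_add_vecMulVec_left (A B : Matrix m n ℝ) (v : m → ℝ) (x : n → ℝ) :
    frobeniusInner (A + vecMulVec v x) B = frobeniusInner A B + v ⬝ᵥ (B *ᵥ x) := by
  rw [frobeniusInner_add_left, frobeniusInner_vecMulVec_left]

theorem frobeniusInner_self_add_vecMulVec (A : Matrix m n ℝ) (v : m → ℝ) (x : n → ℝ) :
    frobeniusInner (A + vecMulVec v x) (A + vecMulVec v x) =
      frobeniusInner A A + 2 * v ⬝ᵥ (A *ᵥ x) + (v ⬝ᵥ v) * (x ⬝ᵥ x) := by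
  rw [frobeniusInner_add_vecMulVec_left, frobeniusInner_comm, frobeniusInner_add_vecMulVec_left,
    add_mulVec, vecMulVec_mulVec, dotProduct_add, op_smul_eq_smul, dotProduct_smul, smul_eq_mul]
  ring

end Matrix

theorem single_sub_single_dotProduct_s2 {ι R : Type*} [Fintype ι] [DecidableEq ι] [Ring R]
    (a b : ι) (w : ι → R) : (Pi.single a 1 - Pi.single b 1) ⬝ᵥ w = w a - w b := by
  simp only [sub_dotProduct, single_dotProduct, one_mul]

theorem single_sub_single_dotProduct_self {ι R : Type*} [Fintype ι] [DecidableEq ι] [Ring R]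
    {a b : ι} (h : a ≠ b) :
    (Pi.single a 1 - Pi.single b 1 : ι → R) ⬝ᵥ (Pi.single a 1 - Pi.single b 1) = 2 := by
  simp [h, h.symm, one_add_one_eq_two]

theorem sub_add_le_mcHinge {k d : ℕ} (U : Matrix (Fin k) (Fin d) ℝ) (x : Fin d → ℝ)
    {y i : Fin k} (hi : i ≠ y) : 1 - (U *ᵥ x) y + (U *ᵥ x) i ≤ mcHinge U x y :=
  le_ciSup_of_le (Set.finite_range _).bddAbove ⟨i, hi⟩ (le_max_right _ _)

section Perceptron

variable {k d : ℕ}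

noncomputable def perceptronStep (W : Matrix (Fin k) (Fin d) ℝ) (x : Fin d → ℝ) (y ŷ : Fin k) :
    Matrix (Fin k) (Fin d) ℝ :=
  W + (if ŷ ≠ y then (1:ℝ) else 0) • vecMulVec (Pi.single y 1 - Pi.single ŷ 1) x

theorem perceptronStep_of_eq (W : Matrix (Fin k) (Fin d) ℝ) (x : Fin d → ℝ) (y : Fin k) :
    perceptronStep W x y y = W := by
  simp [perceptronStep]

theorem perceptronStep_of_ne (W : Matrix (Fin k) (Fin d) ℝ) (x : Fin d → ℝ) {y ŷ : Fin k}
    (h : ŷ ≠ y) :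
    perceptronStep W x y ŷ = W + vecMulVec (Pi.single y 1 - Pi.single ŷ 1) x := by
  simp [perceptronStep, h]

theorem mul_one_sub_mcHinge_le_frobeniusInner_perceptronStep_sub
    (U W : Matrix (Fin k) (Fin d) ℝ) (x : Fin d → ℝ) (y ŷ : Fin k) :
    (if ŷ ≠ y then (1:ℝ) else 0) * (1 - mcHinge U x y) ≤
      frobeniusInner (perceptronStep W x y ŷ) U - frobeniusInner W U := by
  by_cases h : ŷ = y
  · simp [h, perceptronStep_of_eq]
  · rw [perceptronStep_of_ne W x h, frobeniusInner_add_vecMulVec_left,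
      single_sub_single_dotProduct_s2, if_pos h]
    linarith [sub_add_le_mcHinge U x h]

theorem frobeniusInner_self_perceptronStep_sub_le (W : Matrix (Fin k) (Fin d) ℝ)
    (x : Fin d → ℝ) (y ŷ : Fin k) (hŷ : ∀ i, (W *ᵥ x) i ≤ (W *ᵥ x) ŷ) {X : ℝ}
    (hx : √(∑ j, x j ^ 2) ≤ X) :
    frobeniusInner (perceptronStep W x y ŷ) (perceptronStep W x y ŷ) - frobeniusInner W W ≤
      2 * X ^ 2 * (if ŷ ≠ y then (1:ℝ) else 0) := by
  by_cases h : ŷ = y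
  · simp [h, perceptronStep_of_eq]
  · have hxX : x ⬝ᵥ x ≤ X ^ 2 := by
      simpa only [dotProduct, sq] using (Real.sqrt_le_iff.mp hx).2
    rw [perceptronStep_of_ne W x h, frobeniusInner_self_add_vecMulVec,
      single_sub_single_dotProduct_s2, single_sub_single_dotProduct_self (Ne.symm h), if_pos h]
    linarith [hŷ y]

end Perceptron

section PerceptronRun

variable {k d T : ℕ} {x : Fin T → Fin d → ℝ} {y yh : Fin T → Fin k}
  {W : ℕ → Matrix (Fin k) (Fin d) ℝ}

theorem sum_mul_one_sub_mcHinge_le_frobeniusInner (hW0 : W 0 = 0)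
    (hWsucc : ∀ t : Fin T, W (t + 1) = perceptronStep (W t) (x t) (y t) (yh t))
    (U : Matrix (Fin k) (Fin d) ℝ) :
    ∑ t, (if yh t ≠ y t then (1:ℝ) else 0) * (1 - mcHinge U (x t) (y t)) ≤
      frobeniusInner (W T) U :=
  calc _ ≤ ∑ t : Fin T, (frobeniusInner (W (t + 1)) U - frobeniusInner (W t) U) :=
        sum_le_sum fun t _ => hWsucc t ▸
          mul_one_sub_mcHinge_le_frobeniusInner_perceptronStep_sub U (W t) (x t) (y t) (yh t)
    _ = frobeniusInner (W T) U := by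
        rw [Fin.sum_univ_sub_succ (fun n => frobeniusInner (W n) U), hW0]
        simp [frobeniusInner]

theorem frobeniusInner_self_le_mul_sum (hW0 : W 0 = 0)
    (hargmax : ∀ t : Fin T, ∀ i, (W t *ᵥ x t) i ≤ (W t *ᵥ x t) (yh t))
    (hWsucc : ∀ t : Fin T, W (t + 1) = perceptronStep (W t) (x t) (y t) (yh t))
    {X : ℝ} (hX : ∀ t, √(∑ j, x t j ^ 2) ≤ X) :
    frobeniusInner (W T) (W T) ≤ 2 * X ^ 2 * ∑ t, (if yh t ≠ y t then (1:ℝ) else 0) :=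
  calc _ = ∑ t : Fin T, (frobeniusInner (W (t + 1)) (W (t + 1)) -
          frobeniusInner (W t) (W t)) := by
        rw [Fin.sum_univ_sub_succ (fun n => frobeniusInner (W n) (W n)), hW0]
        simp [frobeniusInner]
    _ ≤ _ := by
        rw [mul_sum]
        exact sum_le_sum fun t _ => hWsucc t ▸
          frobeniusInner_self_perceptronStep_sub_le (W t) (x t) (y t) (yh t) (hargmax t) (hX t)

end PerceptronRun

theorem multiclass_perceptron_squared_hinge_mistake_bound_general
    (k d T : ℕ) (hT : 1 ≤ T)
    (x : Fin T → Fin d → ℝ) (y : Fin T → Fin k)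
    (W : ℕ → Matrix (Fin k) (Fin d) ℝ) (yh : Fin T → Fin k)
    (hW0 : W 0 = 0)
    (hargmax : ∀ t : Fin T, ∀ i : Fin k,
      (W t.val).mulVec (x t) i ≤ (W t.val).mulVec (x t) (yh t))
    (hWsucc : ∀ t : Fin T, W (t.val + 1) =
      W t.val + (if yh t ≠ y t then (1:ℝ) else 0) •
        Matrix.vecMulVec (Pi.single (y t) 1 - Pi.single (yh t) 1) (x t))
    (M : ℝ) (hM : M = ∑ t, if yh t ≠ y t then (1:ℝ) else 0)
    (X : ℝ) (hX : ∀ t, Real.sqrt (∑ j, x t j ^ 2) ≤ X)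
    (U : Matrix (Fin k) (Fin d) ℝ)
    (L₂ : ℝ) (hL₂ : L₂ = ∑ t, (mcHinge U (x t) (y t)) ^ 2) :
    M ≤ L₂ + 2 * X ^ 2 * (Real.sqrt (∑ i, ∑ j, U i j ^ 2)) ^ 2
      + X * Real.sqrt (∑ i, ∑ j, U i j ^ 2) * (2 * Real.sqrt 2) * Real.sqrt L₂ := by
  set F := √(∑ i, ∑ j, U i j ^ 2)
  have hX0 : 0 ≤ X := (Real.sqrt_nonneg _).trans (hX ⟨0, hT⟩)
  have hM0 : 0 ≤ M := hM ▸ sum_nonneg fun t _ => by split_ifs <;> norm_num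
  have hloss : ∑ t, (if yh t ≠ y t then (1:ℝ) else 0) * mcHinge U (x t) (y t) ≤ √M * √L₂ :=
    hM ▸ hL₂ ▸ sum_ite_one_mul_le_sqrt_mul_sqrt _ _
  have hprogress := sum_mul_one_sub_mcHinge_le_frobeniusInner hW0 hWsucc U
  have hcorr : frobeniusInner (W T) U ≤ √2 * X * √M * F :=
    calc _ ≤ √(frobeniusInner (W T) (W T)) * F := by
          simpa only [frobeniusInner_self] using frobeniusInner_le_sqrt_mul_sqrt (W T) U
      _ ≤ √(2 * X ^ 2 * M) * F := by
          gcongr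
          exact hM ▸ frobeniusInner_self_le_mul_sum hW0 hargmax hWsucc hX
      _ = √2 * X * √M * F := by
          rw [Real.sqrt_mul (by positivity), Real.sqrt_mul (by norm_num), Real.sqrt_sq hX0]
  have hM_le : M ≤ √M * (√L₂ + √2 * X * F) := by
    simp only [mul_sub, mul_one, sum_sub_distrib, ← hM] at hprogress
    linarith
  have hL₂0 : 0 ≤ L₂ := hL₂ ▸ sum_nonneg fun t _ => sq_nonneg _
  calc M ≤ (√L₂ + √2 * X * F) ^ 2 := Real.le_sq_of_le_sqrt_mul hM0 hM_le
    _ = _ := by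
      linear_combination Real.sq_sqrt hL₂0 + X ^ 2 * F ^ 2 * Real.sq_sqrt (zero_le_two (α := ℝ))

theorem multiclass_perceptron_squared_hinge_mistake_bound
    (k d T : ℕ) (hk : 2 ≤ k) (hd : 1 ≤ d) (hT : 1 ≤ T)
    (x : Fin T → Fin d → ℝ) (y : Fin T → Fin k)
    (W : ℕ → Matrix (Fin k) (Fin d) ℝ) (yh : Fin T → Fin k)
    (hW0 : W 0 = 0)
    (hargmax : ∀ t : Fin T, ∀ i : Fin k,
      (W t.val).mulVec (x t) i ≤ (W t.val).mulVec (x t) (yh t))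
    (hWsucc : ∀ t : Fin T, W (t.val + 1) =
      W t.val + (if yh t ≠ y t then (1:ℝ) else 0) •
        Matrix.vecMulVec (Pi.single (y t) 1 - Pi.single (yh t) 1) (x t))
    (M : ℝ) (hM : M = ∑ t, if yh t ≠ y t then (1:ℝ) else 0)
    (X : ℝ) (hX : ∀ t, Real.sqrt (∑ j, x t j ^ 2) ≤ X)
    (U : Matrix (Fin k) (Fin d) ℝ)
    (L₂ : ℝ) (hL₂ : L₂ = ∑ t, (mcHinge U (x t) (y t)) ^ 2) :
    M ≤ L₂ + 2 * X ^ 2 * (Real.sqrt (∑ i, ∑ j, U i j ^ 2)) ^ 2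
      + X * Real.sqrt (∑ i, ∑ j, U i j ^ 2) * (2 * Real.sqrt 2) * Real.sqrt L₂ :=
  multiclass_perceptron_squared_hinge_mistake_bound_general k d T hT x y W yh hW0 hargmax hWsucc M
    hM X hX U L₂ hL₂
end
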